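/- In the ILT model, every automorphism f of G_t extends to an automorphism of G_{t+1} defined by mapping each node x of G_t to f(x) and each clone x' to (f(x))'; moreover the map f ↦ (this extension) is an injective group homomorphism, so Aut(G_0) embeds as a subgroup of Aut(G_t) for every t ≥ 0. -/

import Mathlib

open SimpleGraph Finset

universe u
variable {V : Type u}

/-- One step of the Iterated Local Transitivity model: every vertex `x` gets a
clone `Sum.inr x` joined to `x` and all of its neighbours; old vertices are `Sum.inl`. -/
def ILTstep (G : SimpleGraph V) : SimpleGraph (V ⊕ V) where
  Adj a b := match a, b with
    | Sum.inl x, Sum.inl y => G.Adj x y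
    | Sum.inl x, Sum.inr y => x = y ∨ G.Adj x y
    | Sum.inr x, Sum.inl y => x = y ∨ G.Adj x y
    | Sum.inr _, Sum.inr _ => False
  symm := by
    constructor
    rintro (x | x) (y | y) h
    · exact SimpleGraph.Adj.symm h
    · exact h.imp Eq.symm (fun hh => SimpleGraph.Adj.symm hh)
    · exact h.imp Eq.symm (fun hh => SimpleGraph.Adj.symm hh)
    · exact h.elim
  loopless := by
    constructor
    rintro (x | x) h
    · exact G.ne_of_adj h rfl
    · exact h

instance ILTstepDecAdj (G : SimpleGraph V) [DecidableEq V] [DecidableRel G.Adj] :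
    DecidableRel (ILTstep G).Adj := fun a b =>
  match a, b with
  | Sum.inl x, Sum.inl y => inferInstanceAs (Decidable (G.Adj x y))
  | Sum.inl x, Sum.inr y => inferInstanceAs (Decidable (x = y ∨ G.Adj x y))
  | Sum.inr x, Sum.inl y => inferInstanceAs (Decidable (x = y ∨ G.Adj x y))
  | Sum.inr _, Sum.inr _ => inferInstanceAs (Decidable False)

/-- The vertex set of the ILT model at time `t`. -/
def ILTV (V : Type u) : ℕ → Type u
  | 0 => V
  | t + 1 => ILTV V t ⊕ ILTV V t

/-- The graph of the ILT model at time `t`, starting from `G`. -/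
def ILTG (G : SimpleGraph V) : (t : ℕ) → SimpleGraph (ILTV V t)
  | 0 => G
  | t + 1 => ILTstep (ILTG G t)

instance ILTVFintype [Fintype V] : ∀ t, Fintype (ILTV V t)
  | 0 => inferInstanceAs (Fintype V)
  | t + 1 => letI := ILTVFintype t
             inferInstanceAs (Fintype (ILTV V t ⊕ ILTV V t))

instance ILTVDecEq [DecidableEq V] : ∀ t, DecidableEq (ILTV V t)
  | 0 => inferInstanceAs (DecidableEq V)
  | t + 1 => letI := ILTVDecEq t
             inferInstanceAs (DecidableEq (ILTV V t ⊕ ILTV V t))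

instance ILTGDecAdj (G : SimpleGraph V) [DecidableEq V] [DecidableRel G.Adj] :
    ∀ t, DecidableRel (ILTG G t).Adj
  | 0 => inferInstanceAs (DecidableRel G.Adj)
  | t + 1 => letI : DecidableEq (ILTV V t) := ILTVDecEq t
             letI : DecidableRel (ILTG G t).Adj := ILTGDecAdj G t
             ILTstepDecAdj (ILTG G t)

/-- The volume of a graph: the sum of the degrees of its vertices. -/
def graphVol [Fintype V] (G : SimpleGraph V) [DecidableRel G.Adj] : ℕ :=
  ∑ v, G.degree v

/-- The Wiener index: the sum of distances over unordered pairs of vertices. -/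
noncomputable def wienerIndex [Fintype V] (G : SimpleGraph V) : ℕ :=
  (∑ x : V, ∑ y : V, G.dist x y) / 2

/-! An isomorphism `f : G ≃g H` extends to `ILTstep G ≃g ILTstep H` by acting as `f` on both
copies of the vertex set, because the adjacencies of `ILTstep` are expressed through equality and
adjacency in the base graph, both of which `f` preserves. Iterating gives `ILTG G t ≃g ILTG H t`;
the construction respects composition and remembers `f` on the original vertices, so on
automorphisms it is an injective group homomorphism. -/

namespace SimpleGraph.Iso

variable {W X : Type*} {G : SimpleGraph V} {H : SimpleGraph W} {K : SimpleGraph X}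

def iltStep (f : G ≃g H) : ILTstep G ≃g ILTstep H where
  toEquiv := Equiv.sumCongr f.toEquiv f.toEquiv
  map_rel_iff' := by
    rintro (x | x) (y | y)
    · exact f.map_adj_iff
    · exact or_congr f.injective.eq_iff f.map_adj_iff
    · exact or_congr f.injective.eq_iff f.map_adj_iff
    · exact Iff.rfl

@[simp]
theorem iltStep_inl (f : G ≃g H) (x : V) : f.iltStep (Sum.inl x) = Sum.inl (f x) := rfl

@[simp]
theorem iltStep_inr (f : G ≃g H) (x : V) : f.iltStep (Sum.inr x) = Sum.inr (f x) := rfl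

theorem iltStep_trans (f : G ≃g H) (g : H ≃g K) :
    iltStep (f.trans g) = f.iltStep.trans g.iltStep := by
  ext (x | x) <;> rfl

theorem iltStep_injective : Function.Injective (iltStep : (G ≃g H) → _) := fun f g h =>
  RelIso.ext fun x => by simpa using RelIso.ext_iff.mp h (Sum.inl x)

def ilt (f : G ≃g H) : ∀ t, ILTG G t ≃g ILTG H t
  | 0 => f
  | t + 1 => (f.ilt t).iltStep

theorem ilt_trans (f : G ≃g H) (g : H ≃g K) :
    ∀ t, ilt (f.trans g) t = (f.ilt t).trans (g.ilt t)
  | 0 => rfl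
  | t + 1 => by rw [ilt, ilt_trans f g t, iltStep_trans]; rfl

theorem ilt_injective : ∀ t, Function.Injective fun f : G ≃g H => f.ilt t
  | 0 => fun _ _ h => h
  | t + 1 => fun _ _ h => ilt_injective t (iltStep_injective h)

end SimpleGraph.Iso

namespace SimpleGraph

-- In the automorphism group `f * g = g.trans f`.
def iltAutHom (G : SimpleGraph V) (t : ℕ) : (G ≃g G) →* (ILTG G t ≃g ILTG G t) :=
  MonoidHom.mk' (fun f => f.ilt t) fun f g => Iso.ilt_trans g f t

theorem iltAutHom_injective (G : SimpleGraph V) (t : ℕ) : Function.Injective (iltAutHom G t) :=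
  Iso.ilt_injective t

end SimpleGraph

theorem ILT_automorphism_embeds (G : SimpleGraph V) :
    (∀ f : G ≃g G, ∃ F : ILTstep G ≃g ILTstep G,
      (∀ x, F (Sum.inl x) = Sum.inl (f x)) ∧ (∀ x, F (Sum.inr x) = Sum.inr (f x))) ∧
    (∀ t : ℕ, ∃ Φ : (G ≃g G) → ((ILTG G t) ≃g (ILTG G t)),
      Function.Injective Φ ∧ ∀ f g : G ≃g G, Φ (f.trans g) = (Φ f).trans (Φ g)) :=
  ⟨fun f => ⟨f.iltStep, f.iltStep_inl, f.iltStep_inr⟩,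
    fun t => ⟨iltAutHom G t, iltAutHom_injective G t, fun f g => map_mul (iltAutHom G t) g f⟩⟩
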